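/- arXiv:2308.11835 — 2 statements merged into one kernel-verified Lean document; each statement's English description precedes it below -/
import Mathlib

section
/- Let P be a probability measure and W ≥ 0 a random variable with 0 < E[W] < ∞, and define the reweighted measure P* = (W/E[W]) dP. For random variables S and A on this space, if under P* the conditional law of S given σ(A) is Q_A weighted by g(S) (normalized), where g ≥ 0 is measurable and W = h(S, A) for a measurable h, then under P the conditional law of S given σ(A) is Q_A weighted by g(S)/h(S,A) (normalized), provided the normalizations are finite and positive a.s. -/
/-!
Since `W = h(S, A) > 0`, the measure `P` has density `c / h(S, A)` with respect to
`P* = (W / c) P`, a function of `(S, A)`. Bayes' formula for conditional laws says that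
reweighting a measure by `v(S, A)` reweights a version `κ_A` of the conditional law of `S`
given `σ(A)` by `v(·, A)`; it rests on `∫_B v(S, A) Y = ∫_B (∫ v(s, A) dκ_A(s)) Y` for
`B ∈ σ(A)` and `Y` a function of `A`. So the conditional law must integrate test functions
`φ(S, A)` in which `A` is frozen, whereas the hypothesis only covers functions of `S`: the
extension goes through rectangles `D × E`, a π-λ argument and monotone convergence, for
Lebesgue conditional expectations `μ⁻[·|σ(A)]`. Finally, reweighting `Q_A` by `g` and then by
`c / h(·, A)` is reweighting it by `g / h(·, A)`.
-/

open MeasureTheory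

open scoped ENNReal

namespace MeasureTheory

section ConditionalLExpectation

variable {Ω : Type*} {m m₀ : MeasurableSpace Ω} {μ : Measure Ω}

theorem condLExp_indicator {t : Set Ω} (ht : MeasurableSet[m] t) (X : Ω → ℝ≥0∞) :
    μ⁻[t.indicator X|m] =ᵐ[μ] t.indicator μ⁻[X|m] := by
  by_cases hm : m ≤ m₀; swap
  · simp [condLExp_of_not_le hm]
  by_cases hσ : SigmaFinite (μ.trim hm); swap
  · simp [condLExp_of_not_sigmaFinite hm hσ]
  refine (ae_eq_condLExp hm μ _ ((measurable_condLExp m μ X).indicator ht) fun s hs => ?_).symm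
  rw [setLIntegral_indicator (hm t ht), setLIntegral_indicator (hm t ht),
    setLIntegral_condLExp hm μ X (ht.inter hs)]

theorem condLExp_iSup {X : ℕ → Ω → ℝ≥0∞} (hX : ∀ n, AEMeasurable (X n) μ) (hmono : Monotone X) :
    μ⁻[fun ω => ⨆ n, X n ω|m] =ᵐ[μ] fun ω => ⨆ n, μ⁻[X n|m] ω := by
  by_cases hm : m ≤ m₀; swap
  · simp [condLExp_of_not_le hm]; rfl
  by_cases hσ : SigmaFinite (μ.trim hm); swap
  · simp [condLExp_of_not_sigmaFinite hm hσ]; rfl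
  have hmono' : ∀ᵐ ω ∂μ, Monotone fun n => μ⁻[X n|m] ω := by
    filter_upwards [ae_all_iff.2 fun n : ℕ =>
      condLExp_mono (mΩ := m) (ae_of_all μ (hmono n.le_succ))] with ω h
    exact monotone_nat_of_le_succ h
  refine (ae_eq_condLExp hm μ _ (.iSup fun n => measurable_condLExp m μ (X n)) fun s hs => ?_).symm
  rw [lintegral_iSup' (fun n => (measurable_condLExp' m μ (X n)).aemeasurable.restrict)
      (ae_restrict_of_ae hmono'),
    lintegral_iSup' (fun n => (hX n).restrict) (ae_of_all _ fun ω i j hij => hmono hij ω)]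
  exact iSup_congr fun n => setLIntegral_condLExp hm μ (X n) hs

end ConditionalLExpectation

lemma indicator_iUnion_one_eq_tsum {α : Type*} [MeasurableSpace α] {f : ℕ → Set α}
    (hf : Pairwise (Function.onFun Disjoint f)) (hfm : ∀ n, MeasurableSet (f n)) (x : α) :
    (⋃ n, f n).indicator (1 : α → ℝ≥0∞) x = ∑' n, (f n).indicator 1 x := by
  simp_rw [← Measure.dirac_apply' x (hfm _), ← Measure.dirac_apply' x (.iUnion hfm),
    measure_iUnion hf hfm]

lemma lintegral_ofReal_ne_zero {α : Type*} {mα : MeasurableSpace α} {ν : Measure α} {g : α → ℝ}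
    (hgi : Integrable g ν) (hg0 : ∀ x, 0 ≤ g x) (hpos : 0 < ∫ x, g x ∂ν) :
    ∫⁻ x, ENNReal.ofReal (g x) ∂ν ≠ 0 := by
  rw [← ofReal_integral_eq_lintegral_ofReal hgi (ae_of_all _ hg0)]
  exact (ENNReal.ofReal_pos.2 hpos).ne'

namespace Measure

variable {α : Type*} {mα : MeasurableSpace α} {ν : Measure α}

/-- The zero measure when `∫⁻ x, f x ∂ν` is `0` or `∞`. -/
noncomputable def normalizedWithDensity (ν : Measure α) (f : α → ℝ≥0∞) : Measure α :=
  (∫⁻ x, f x ∂ν)⁻¹ • ν.withDensity f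

section

variable {f g : α → ℝ≥0∞}

lemma lintegral_normalizedWithDensity (hf : Measurable f) {φ : α → ℝ≥0∞} (hφ : Measurable φ) :
    ∫⁻ x, φ x ∂ν.normalizedWithDensity f = (∫⁻ x, f x * φ x ∂ν) / ∫⁻ x, f x ∂ν := by
  rw [normalizedWithDensity, lintegral_smul_measure, lintegral_withDensity_eq_lintegral_mul _ hf hφ,
    smul_eq_mul, ENNReal.div_eq_inv_mul]
  rfl

lemma isProbabilityMeasure_normalizedWithDensity (h0 : ∫⁻ x, f x ∂ν ≠ 0)
    (htop : ∫⁻ x, f x ∂ν ≠ ∞) : IsProbabilityMeasure (ν.normalizedWithDensity f) where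
  measure_univ := by
    rw [normalizedWithDensity, smul_apply, withDensity_apply _ MeasurableSet.univ,
      restrict_univ, smul_eq_mul, ENNReal.inv_mul_cancel h0 htop]

lemma normalizedWithDensity_const_mul {c : ℝ≥0∞} (hc0 : c ≠ 0) (hc : c ≠ ∞) :
    ν.normalizedWithDensity (fun x => c * f x) = ν.normalizedWithDensity f := by
  rw [normalizedWithDensity, normalizedWithDensity, lintegral_const_mul' _ _ hc,
    show (fun x => c * f x) = c • f from rfl, withDensity_smul' _ _ hc, smul_smul,
    ENNReal.mul_inv (.inl hc0) (.inl hc), mul_comm c⁻¹, mul_assoc, ENNReal.inv_mul_cancel hc0 hc,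
    mul_one]

lemma normalizedWithDensity_normalizedWithDensity (hf : Measurable f) (hg : Measurable g)
    (h0 : ∫⁻ x, f x ∂ν ≠ 0) (htop : ∫⁻ x, f x ∂ν ≠ ∞) :
    (ν.normalizedWithDensity f).normalizedWithDensity g =
      ν.normalizedWithDensity fun x => f x * g x := by
  rw [normalizedWithDensity, lintegral_normalizedWithDensity hf hg, normalizedWithDensity,
    withDensity_smul_measure, ← withDensity_mul _ hf hg, smul_smul, ENNReal.div_eq_inv_mul,
    ENNReal.mul_inv (.inl (ENNReal.inv_ne_zero.2 htop)) (.inl (ENNReal.inv_ne_top.2 h0)), inv_inv,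
    mul_comm, ← mul_assoc, ENNReal.inv_mul_cancel h0 htop, one_mul, normalizedWithDensity]
  rfl

end

section

variable {g : α → ℝ}

lemma integral_normalizedWithDensity_ofReal (hg : Measurable g) (hg0 : ∀ x, 0 ≤ g x)
    (hgi : Integrable g ν) (F : α → ℝ) :
    ∫ x, F x ∂ν.normalizedWithDensity (fun x => ENNReal.ofReal (g x)) =
      (∫ x, F x * g x ∂ν) / ∫ x, g x ∂ν := by
  rw [normalizedWithDensity, integral_smul_measure,
    integral_withDensity_eq_integral_toReal_smul hg.ennreal_ofReal
      (.of_forall fun _ => ENNReal.ofReal_lt_top),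
    ← ofReal_integral_eq_lintegral_ofReal hgi (.of_forall hg0), ENNReal.toReal_inv,
    ENNReal.toReal_ofReal (integral_nonneg hg0), smul_eq_mul, inv_mul_eq_div]
  simp_rw [ENNReal.toReal_ofReal (hg0 _), smul_eq_mul, mul_comm (g _)]

lemma isProbabilityMeasure_normalizedWithDensity_ofReal (hgi : Integrable g ν)
    (hg0 : ∀ x, 0 ≤ g x) (hpos : 0 < ∫ x, g x ∂ν) :
    IsProbabilityMeasure (ν.normalizedWithDensity fun x => ENNReal.ofReal (g x)) :=
  isProbabilityMeasure_normalizedWithDensity (lintegral_ofReal_ne_zero hgi hg0 hpos)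
    hgi.lintegral_lt_top.ne

lemma normalizedWithDensity_ofReal_div (hg : Measurable g) (hgi : Integrable g ν)
    (hg0 : ∀ x, 0 ≤ g x) (hpos : 0 < ∫ x, g x ∂ν) {w : α → ℝ} (hw : Measurable w)
    (hw0 : ∀ x, 0 < w x) {c : ℝ} (hc : 0 < c) :
    (ν.normalizedWithDensity fun x => ENNReal.ofReal (g x)).normalizedWithDensity
        (fun x => (ENNReal.ofReal (w x / c))⁻¹) =
      ν.normalizedWithDensity fun x => ENNReal.ofReal (g x / w x) := by
  have hwc : Measurable fun x => (ENNReal.ofReal (w x / c))⁻¹ :=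
    (hw.div_const c).ennreal_ofReal.inv
  rw [normalizedWithDensity_normalizedWithDensity hg.ennreal_ofReal hwc
      (lintegral_ofReal_ne_zero hgi hg0 hpos) hgi.lintegral_lt_top.ne,
    ← normalizedWithDensity_const_mul (f := fun x => ENNReal.ofReal (g x / w x))
      (ENNReal.ofReal_pos.2 hc).ne' ENNReal.ofReal_ne_top]
  congr 1
  ext x
  rw [← ENNReal.ofReal_inv_of_pos (div_pos (hw0 x) hc), inv_div, ← ENNReal.ofReal_mul (hg0 x),
    ← ENNReal.ofReal_mul hc.le]
  ring_nf

end

end Measure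

end MeasureTheory

section CondLaw

variable {Ω 𝒮 𝒜 : Type*} {mΩ : MeasurableSpace Ω} [MeasurableSpace 𝒮] [m𝒜 : MeasurableSpace 𝒜]
  {μ : Measure Ω} {S : Ω → 𝒮} {A : Ω → 𝒜} {κ : 𝒜 → Measure 𝒮}

variable (μ S A κ) in
/-- `κ (A ω)` is a version of the conditional law of `S` given `σ(A)`, as far as the test
function `φ(S, A)`, with `A` frozen, is concerned. -/
def IsCondLawFor (φ : 𝒮 × 𝒜 → ℝ≥0∞) : Prop :=
  μ⁻[fun ω => φ (S ω, A ω)|m𝒜.comap A] =ᵐ[μ] fun ω => ∫⁻ s, φ (s, A ω) ∂κ (A ω)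

variable (μ S A κ) in
def IsCondLaw : Prop := ∀ φ : 𝒮 × 𝒜 → ℝ≥0∞, Measurable φ → IsCondLawFor μ S A κ φ

namespace IsCondLawFor

variable (hS : Measurable S) (hA : Measurable A)
include hS hA

theorem add {φ ψ : 𝒮 × 𝒜 → ℝ≥0∞} (hφ : Measurable φ)
    (hφκ : IsCondLawFor μ S A κ φ) (hψκ : IsCondLawFor μ S A κ ψ) :
    IsCondLawFor μ S A κ (φ + ψ) := by
  filter_upwards [condLExp_add_left (mΩ := m𝒜.comap A) (fun ω => ψ (S ω, A ω))
    (by fun_prop : Measurable fun ω => φ (S ω, A ω)).aemeasurable, hφκ, hψκ] with ω h hφω hψω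
  refine h.trans ?_
  simp only [Pi.add_apply, hφω, hψω]
  exact (lintegral_add_left (hφ.comp measurable_prodMk_right) _).symm

theorem const_mul {φ : 𝒮 × 𝒜 → ℝ≥0∞} (hφ : Measurable φ) (hφκ : IsCondLawFor μ S A κ φ)
    (c : ℝ≥0∞) : IsCondLawFor μ S A κ fun p => c * φ p := by
  filter_upwards [condLExp_smul (mΩ := m𝒜.comap A) _
    (by fun_prop : Measurable fun ω => φ (S ω, A ω)).aemeasurable c, hφκ] with ω h hφω
  refine h.trans ?_
  rw [Pi.smul_apply, hφω, smul_eq_mul]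
  exact (lintegral_const_mul _ (hφ.comp measurable_prodMk_right)).symm

theorem tsum {φ : ℕ → 𝒮 × 𝒜 → ℝ≥0∞} (hφ : ∀ n, Measurable (φ n))
    (hφκ : ∀ n, IsCondLawFor μ S A κ (φ n)) : IsCondLawFor μ S A κ fun p => ∑' n, φ n p := by
  have hsum : (fun ω => ∑' n, φ n (S ω, A ω)) = ∑' n, fun ω => φ n (S ω, A ω) := by
    ext ω; rw [ENNReal.tsum_apply]
  filter_upwards [condLExp_tsum (m𝒜.comap A)
    fun n => (by fun_prop : Measurable fun ω => φ n (S ω, A ω)).aemeasurable,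
    ae_all_iff.2 hφκ] with ω h hφω
  rw [hsum, h, ENNReal.tsum_apply, tsum_congr hφω]
  exact (lintegral_tsum fun n => ((hφ n).comp measurable_prodMk_right).aemeasurable).symm

theorem iSup {φ : ℕ → 𝒮 × 𝒜 → ℝ≥0∞} (hφ : ∀ n, Measurable (φ n)) (hmono : Monotone φ)
    (hφκ : ∀ n, IsCondLawFor μ S A κ (φ n)) : IsCondLawFor μ S A κ fun p => ⨆ n, φ n p := by
  filter_upwards [condLExp_iSup (m := m𝒜.comap A)
    (fun n => (by fun_prop : Measurable fun ω => φ n (S ω, A ω)).aemeasurable)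
    (fun i j hij ω => hmono hij (S ω, A ω)), ae_all_iff.2 hφκ] with ω h hφω
  refine h.trans ?_
  simp only [hφω]
  exact (lintegral_iSup (fun n => (hφ n).comp measurable_prodMk_right)
    fun i j hij s => hmono hij (s, A ω)).symm

theorem of_add_left {φ ψ : 𝒮 × 𝒜 → ℝ≥0∞} (hφ : Measurable φ) (hφκ : IsCondLawFor μ S A κ φ)
    (hφψκ : IsCondLawFor μ S A κ (φ + ψ)) (hfin : ∀ᵐ ω ∂μ, ∫⁻ s, φ (s, A ω) ∂κ (A ω) ≠ ∞) :
    IsCondLawFor μ S A κ ψ := by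
  filter_upwards [condLExp_add_left (mΩ := m𝒜.comap A) (fun ω => ψ (S ω, A ω))
    (by fun_prop : Measurable fun ω => φ (S ω, A ω)).aemeasurable, hφκ, hφψκ, hfin]
    with ω h hφω hφψω hω
  refine (ENNReal.add_right_inj hω).1 ?_
  calc ∫⁻ s, φ (s, A ω) ∂κ (A ω) + μ⁻[fun ω => ψ (S ω, A ω)|m𝒜.comap A] ω
      = μ⁻[fun ω => (φ + ψ) (S ω, A ω)|m𝒜.comap A] ω := by rw [← hφω]; exact h.symm
    _ = _ := hφψω
    _ = _ := lintegral_add_left (hφ.comp measurable_prodMk_right) _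

end IsCondLawFor

theorem isCondLawFor_one [IsFiniteMeasure μ] (hA : Measurable A)
    (hκ : ∀ᵐ ω ∂μ, IsProbabilityMeasure (κ (A ω))) : IsCondLawFor μ S A κ 1 := by
  filter_upwards [hκ] with ω hω
  rw [Pi.one_def, condLExp_const hA.comap_le]
  simp

theorem isCondLawFor_indicator_prod
    (hind : ∀ D, MeasurableSet D → IsCondLawFor μ S A κ fun p => D.indicator 1 p.1)
    {D : Set 𝒮} (hD : MeasurableSet D) {E : Set 𝒜} (hE : MeasurableSet E) :
    IsCondLawFor μ S A κ ((D ×ˢ E).indicator 1) := by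
  have hprod : (fun ω => (D ×ˢ E).indicator 1 (S ω, A ω)) =
      (A ⁻¹' E).indicator fun ω => D.indicator (1 : 𝒮 → ℝ≥0∞) (S ω) := by
    ext ω
    by_cases hω : A ω ∈ E <;> simp [Set.indicator_prod_one, hω]
  filter_upwards [condLExp_indicator (m := m𝒜.comap A) ⟨E, hE, rfl⟩
    (fun ω => D.indicator (1 : 𝒮 → ℝ≥0∞) (S ω)), hind D hD] with ω h hDω
  rw [hprod, h]
  by_cases hω : A ω ∈ E
  · simp [Set.indicator_prod_one, hω, hDω]
  · simp [hω]

theorem isCondLawFor_indicator [IsFiniteMeasure μ] (hS : Measurable S) (hA : Measurable A)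
    (hκ : ∀ᵐ ω ∂μ, IsProbabilityMeasure (κ (A ω)))
    (hind : ∀ D, MeasurableSet D → IsCondLawFor μ S A κ fun p => D.indicator 1 p.1)
    {D : Set (𝒮 × 𝒜)} (hD : MeasurableSet D) : IsCondLawFor μ S A κ (D.indicator 1) := by
  induction D, hD using
    MeasurableSpace.induction_on_inter generateFrom_prod.symm isPiSystem_prod with
  | empty =>
    simp only [IsCondLawFor, Set.indicator_empty, lintegral_zero]
    exact .of_eq (condLExp_zero μ)
  | basic t ht =>
    obtain ⟨D, hD, E, hE, rfl⟩ := ht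
    exact isCondLawFor_indicator_prod hind hD hE
  | compl t htm ih =>
    refine ih.of_add_left hS hA (measurable_one.indicator htm) ?_ ?_
    · rw [Set.indicator_self_add_compl]
      exact isCondLawFor_one hA hκ
    · filter_upwards [hκ] with ω hω
      exact ((lintegral_indicator_one_le _).trans prob_le_one).trans_lt ENNReal.one_lt_top |>.ne
  | iUnion f hf hfm ih =>
    simp_rw [funext (indicator_iUnion_one_eq_tsum hf hfm)]
    exact IsCondLawFor.tsum hS hA (fun n => measurable_one.indicator (hfm n)) ih

theorem isCondLaw_of_indicator [IsFiniteMeasure μ] (hS : Measurable S) (hA : Measurable A)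
    (hκ : ∀ᵐ ω ∂μ, IsProbabilityMeasure (κ (A ω)))
    (hind : ∀ D, MeasurableSet D → IsCondLawFor μ S A κ fun p => D.indicator 1 p.1) :
    IsCondLaw μ S A κ := by
  refine fun φ hφ => Measurable.ennreal_induction ?_ ?_ ?_ hφ
  · intro c D hD
    have hconst : D.indicator (fun _ => c) = fun p => c * D.indicator 1 p := by
      ext p; by_cases hp : p ∈ D <;> simp [hp]
    rw [hconst]
    exact (isCondLawFor_indicator hS hA hκ hind hD).const_mul hS hA
      (measurable_one.indicator hD) c
  · intro φ ψ _ hφ _ hφκ hψκ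
    exact hφκ.add hS hA hφ hψκ
  · intro φ hφ hmono hφκ
    exact IsCondLawFor.iSup hS hA hφ hmono hφκ

theorem isCondLaw_of_condExp [IsFiniteMeasure μ] (hS : Measurable S) (hA : Measurable A)
    (hκ : ∀ᵐ ω ∂μ, IsProbabilityMeasure (κ (A ω)))
    (hcond : ∀ F : 𝒮 → ℝ, Measurable F → (∃ C : ℝ, ∀ s, |F s| ≤ C) →
      μ[fun ω => F (S ω)|m𝒜.comap A] =ᵐ[μ] fun ω => ∫ s, F s ∂κ (A ω)) :
    IsCondLaw μ S A κ := by
  refine isCondLaw_of_indicator hS hA hκ fun D hD => ?_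
  have hF : Measurable (D.indicator (1 : 𝒮 → ℝ)) := measurable_one.indicator hD
  have hC : ∀ s, |D.indicator (1 : 𝒮 → ℝ) s| ≤ 1 := fun s => by
    by_cases hs : s ∈ D <;> simp [hs]
  have hofReal : (fun ω => D.indicator (1 : 𝒮 → ℝ≥0∞) (S ω)) =
      fun ω => ENNReal.ofReal (D.indicator 1 (S ω)) := by
    ext ω; by_cases hs : S ω ∈ D <;> simp [hs]
  have hint : Integrable (fun ω => D.indicator (1 : 𝒮 → ℝ) (S ω)) μ :=
    .of_bound (hF.comp hS).aestronglyMeasurable 1 (ae_of_all _ fun ω => hC (S ω))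
  filter_upwards [condLExp_ofReal (m𝒜.comap A) hint
    (ae_of_all _ fun ω => Set.indicator_nonneg (fun _ _ => zero_le_one) _),
    hcond _ hF ⟨1, hC⟩, hκ] with ω h1 h2 hω
  rw [hofReal, h1, h2, integral_indicator_one hD, ofReal_measureReal, lintegral_indicator_one hD]

theorem IsCondLaw.condExp_ae_eq [IsFiniteMeasure μ] (hS : Measurable S) (hA : Measurable A)
    (hκ : ∀ᵐ ω ∂μ, IsProbabilityMeasure (κ (A ω))) (h : IsCondLaw μ S A κ) {F : 𝒮 → ℝ}
    (hF : Measurable F) (hFb : ∃ C : ℝ, ∀ s, |F s| ≤ C) :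
    μ[fun ω => F (S ω)|m𝒜.comap A] =ᵐ[μ] fun ω => ∫ s, F s ∂κ (A ω) := by
  obtain ⟨C, hC⟩ := hFb
  have hFC0 : ∀ s, 0 ≤ F s + C := fun s => by linarith [neg_abs_le (F s), hC s]
  have hFS : Integrable (fun ω => F (S ω)) μ :=
    .of_bound (hF.comp hS).aestronglyMeasurable C (ae_of_all _ fun ω => hC (S ω))
  have hFC : μ[fun ω => F (S ω) + C|m𝒜.comap A] =ᵐ[μ] fun ω => ∫ s, F s + C ∂κ (A ω) := by
    filter_upwards [toReal_condLExp (m𝒜.comap A) (f := fun ω => ENNReal.ofReal (F (S ω) + C))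
      (by fun_prop) ((hFS.add (integrable_const C)).lintegral_lt_top).ne,
      h (fun p => ENNReal.ofReal (F p.1 + C)) (by fun_prop)] with ω h1 h2
    simp only [ENNReal.toReal_ofReal (hFC0 _)] at h1
    rw [← h1, h2, integral_eq_lintegral_of_nonneg_ae (ae_of_all _ hFC0) (by fun_prop)]
  filter_upwards [hFC, condExp_add hFS (integrable_const C) (m𝒜.comap A), hκ] with ω h1 h2 hω
  rw [condExp_const hA.comap_le] at h2
  rw [integral_add (.of_bound hF.aestronglyMeasurable C (ae_of_all _ hC))
    (integrable_const C)] at h1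
  simp only [Pi.add_apply, integral_const, probReal_univ, one_smul] at h1 h2
  linarith [h2.symm.trans h1]

theorem IsCondLaw.setLIntegral_mul [IsFiniteMeasure μ] (hA : Measurable A)
    (h : IsCondLaw μ S A κ) {ψ : 𝒮 × 𝒜 → ℝ≥0∞} (hψ : Measurable ψ) {Y : Ω → ℝ≥0∞}
    (hY : Measurable[m𝒜.comap A] Y) {s : Set Ω} (hs : MeasurableSet[m𝒜.comap A] s) :
    ∫⁻ ω in s, ψ (S ω, A ω) * Y ω ∂μ = ∫⁻ ω in s, (∫⁻ x, ψ (x, A ω) ∂κ (A ω)) * Y ω ∂μ := by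
  obtain ⟨G, hG, rfl⟩ := hY.exists_eq_measurable_comp
  rw [← setLIntegral_condLExp hA.comap_le μ _ hs]
  refine lintegral_congr_ae (ae_restrict_of_ae ?_)
  filter_upwards [h (fun p => ψ p * G p.2) (hψ.mul (hG.comp measurable_snd))] with ω hω
  exact hω.trans (lintegral_mul_const _ (hψ.comp measurable_prodMk_right))

theorem IsCondLaw.withDensity [IsFiniteMeasure μ] (hS : Measurable S) (hA : Measurable A)
    {v : 𝒮 × 𝒜 → ℝ≥0∞} (hv : Measurable v) (hv0 : ∀ p, v p ≠ 0)
    [IsFiniteMeasure (μ.withDensity fun ω => v (S ω, A ω))] (hκ : ∀ᵐ ω ∂μ, κ (A ω) ≠ 0)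
    (h : IsCondLaw μ S A κ) :
    IsCondLaw (μ.withDensity fun ω => v (S ω, A ω)) S A
      fun a => (κ a).normalizedWithDensity fun x => v (x, a) := by
  intro φ hφ
  have hm : m𝒜.comap A ≤ mΩ := hA.comap_le
  have hd : Measurable fun ω => v (S ω, A ω) := by fun_prop
  have hvA : ∀ a, Measurable fun x => v (x, a) := fun a => hv.comp measurable_prodMk_right
  have hnorm0 : ∀ᵐ ω ∂μ, ∫⁻ x, v (x, A ω) ∂κ (A ω) ≠ 0 := by
    filter_upwards [hκ] with ω hω h0
    have := ae_neBot.2 hω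
    obtain ⟨x, hx⟩ := ((lintegral_eq_zero_iff (hvA (A ω))).1 h0).exists
    exact hv0 _ hx
  have hnormtop : ∀ᵐ ω ∂μ, ∫⁻ x, v (x, A ω) ∂κ (A ω) ≠ ∞ := by
    refine (ae_lt_top' ((measurable_condLExp' _ μ _).aemeasurable.congr (h v hv)) ?_).mono
      fun _ h => h.ne
    rw [← lintegral_congr_ae (h v hv), lintegral_condLExp hm, ← setLIntegral_univ,
      ← withDensity_apply _ .univ]
    exact measure_ne_top _ _
  set Y := fun ω => μ⁻[fun ω => v (S ω, A ω) * φ (S ω, A ω)|m𝒜.comap A] ω /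
    μ⁻[fun ω => v (S ω, A ω)|m𝒜.comap A] ω
  have hY : Measurable[m𝒜.comap A] Y := (measurable_condLExp _ _ _).div (measurable_condLExp _ _ _)
  have hYae : Y =ᵐ[μ] fun ω => (∫⁻ x, v (x, A ω) * φ (x, A ω) ∂κ (A ω)) /
      ∫⁻ x, v (x, A ω) ∂κ (A ω) := by
    filter_upwards [h (fun p => v p * φ p) (hv.mul hφ), h v hv] with ω h1 h2
    simp only [Y, h1, h2]
  refine (ae_eq_condLExp hm _ _ hY fun s hs => ?_).symm.trans
    ((withDensity_absolutelyContinuous _ _).ae_le ?_)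
  · calc ∫⁻ ω in s, Y ω ∂(μ.withDensity fun ω => v (S ω, A ω))
        = ∫⁻ ω in s, v (S ω, A ω) * Y ω ∂μ :=
          setLIntegral_withDensity_eq_setLIntegral_mul _ hd (hY.mono hm le_rfl) (hm s hs)
      _ = ∫⁻ ω in s, (∫⁻ x, v (x, A ω) ∂κ (A ω)) * Y ω ∂μ := h.setLIntegral_mul hA hv hY hs
      _ = ∫⁻ ω in s, μ⁻[fun ω => v (S ω, A ω) * φ (S ω, A ω)|m𝒜.comap A] ω ∂μ := by
          refine lintegral_congr_ae (ae_restrict_of_ae ?_)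
          filter_upwards [hYae, h (fun p => v p * φ p) (hv.mul hφ), hnorm0, hnormtop] with ω h1 h2 h3 h4
          rw [h1, h2, ENNReal.mul_div_cancel h3 h4]
      _ = ∫⁻ ω in s, φ (S ω, A ω) ∂(μ.withDensity fun ω => v (S ω, A ω)) := by
          rw [setLIntegral_condLExp hm _ _ hs,
            setLIntegral_withDensity_eq_setLIntegral_mul _ hd (by fun_prop) (hm s hs)]
          rfl
  · filter_upwards [hYae] with ω hω
    exact hω.trans (Measure.lintegral_normalizedWithDensity (hvA (A ω))
      (hφ.comp measurable_prodMk_right)).symm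

theorem IsCondLaw.of_withDensity [IsFiniteMeasure μ] (hS : Measurable S) (hA : Measurable A)
    {w : 𝒮 × 𝒜 → ℝ≥0∞} (hw : Measurable w) (hw0 : ∀ p, w p ≠ 0) (hwtop : ∀ p, w p ≠ ∞)
    [IsFiniteMeasure (μ.withDensity fun ω => w (S ω, A ω))] (hκ : ∀ᵐ ω ∂μ, κ (A ω) ≠ 0)
    (h : IsCondLaw (μ.withDensity fun ω => w (S ω, A ω)) S A κ) :
    IsCondLaw μ S A fun a => (κ a).normalizedWithDensity fun x => (w (x, a))⁻¹ := by
  have hinv : ((μ.withDensity fun ω => w (S ω, A ω)).withDensity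
      fun ω => (w (S ω, A ω))⁻¹) = μ :=
    withDensity_inv_same (by fun_prop) (ae_of_all _ fun _ => hw0 _) (ae_of_all _ fun _ => hwtop _)
  have : IsFiniteMeasure ((μ.withDensity fun ω => w (S ω, A ω)).withDensity
      fun ω => (w (S ω, A ω))⁻¹) := by rw [hinv]; infer_instance
  have hwinv : Measurable fun p => (w p)⁻¹ := hw.inv
  have := h.withDensity hS hA hwinv (fun p => ENNReal.inv_ne_zero.2 (hwtop p))
    ((withDensity_absolutelyContinuous _ _).ae_le hκ)
  rwa [hinv] at this

theorem IsCondLaw.congr {κ' : 𝒜 → Measure 𝒮} (h : IsCondLaw μ S A κ)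
    (hκ : ∀ᵐ ω ∂μ, κ (A ω) = κ' (A ω)) : IsCondLaw μ S A κ' := fun φ hφ => by
  filter_upwards [h φ hφ, hκ] with ω h1 h2
  rw [h1, h2]

end CondLaw

open Measure in
theorem conditional_law_undo_reweighting_general
    {Ω 𝒮 𝒜 : Type*} [MeasurableSpace Ω] [MeasurableSpace 𝒮] [MeasurableSpace 𝒜]
    (P : Measure Ω) [IsProbabilityMeasure P]
    (S : Ω → 𝒮) (A : Ω → 𝒜) (hS : Measurable S) (hA : Measurable A)
    (Q : 𝒜 → Measure 𝒮)
    (g : 𝒮 → ℝ) (hg : Measurable g) (hg0 : ∀ s, 0 ≤ g s)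
    (h : 𝒮 → 𝒜 → ℝ) (hh : Measurable (Function.uncurry h))
    (hh0 : ∀ s a, 0 < h s a)
    (W : Ω → ℝ) (hW : ∀ ω, W ω = h (S ω) (A ω))
    (hWint : Integrable W P) (hWpos : 0 < ∫ ω, W ω ∂P)
    -- normalizations finite and positive a.s.:
    (hgint : ∀ᵐ ω ∂P, Integrable g (Q (A ω)) ∧ 0 < ∫ s, g s ∂Q (A ω))
    (hghint : ∀ᵐ ω ∂P, Integrable (fun s => g s / h s (A ω)) (Q (A ω)) ∧
      0 < ∫ s, g s / h s (A ω) ∂Q (A ω))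
    -- under `P*`, the conditional law of `S` given `σ(A)` is `Q_A` weighted by `g`:
    (hcondStar : ∀ F : 𝒮 → ℝ, Measurable F → (∃ C : ℝ, ∀ s, |F s| ≤ C) →
      (P.withDensity (fun ω => ENNReal.ofReal (W ω / ∫ ω', W ω' ∂P)))[fun ω => F (S ω)
          | MeasurableSpace.comap A inferInstance]
        =ᵐ[P.withDensity (fun ω => ENNReal.ofReal (W ω / ∫ ω', W ω' ∂P))]
          fun ω => (∫ s, F s * g s ∂Q (A ω)) / ∫ s, g s ∂Q (A ω)) :
    ∀ F : 𝒮 → ℝ, Measurable F → (∃ C : ℝ, ∀ s, |F s| ≤ C) →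
      P[fun ω => F (S ω) | MeasurableSpace.comap A inferInstance]
        =ᵐ[P] fun ω =>
          (∫ s, F s * (g s / h s (A ω)) ∂Q (A ω)) /
            ∫ s, g s / h s (A ω) ∂Q (A ω) := by
  intro F hF hFbd
  set c := ∫ ω, W ω ∂P
  set w : 𝒮 × 𝒜 → ℝ≥0∞ := fun p => ENNReal.ofReal (h p.1 p.2 / c)
  have hw : Measurable w := (hh.div_const c).ennreal_ofReal
  have hPstar : (P.withDensity fun ω => ENNReal.ofReal (W ω / c)) =
      P.withDensity fun ω => w (S ω, A ω) := by simp_rw [w, hW]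
  rw [hPstar] at hcondStar
  have : IsFiniteMeasure (P.withDensity fun ω => w (S ω, A ω)) :=
    hPstar ▸ isFiniteMeasure_withDensity_ofReal (hWint.div_const c).2
  have hPstarP := withDensity_absolutelyContinuous P fun ω => w (S ω, A ω)
  have hκ : ∀ᵐ ω ∂P, IsProbabilityMeasure
      ((Q (A ω)).normalizedWithDensity fun s => ENNReal.ofReal (g s)) :=
    hgint.mono fun _ hω => isProbabilityMeasure_normalizedWithDensity_ofReal hω.1 hg0 hω.2
  have hstar := isCondLaw_of_condExp (κ := fun a => (Q a).normalizedWithDensity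
      fun s => ENNReal.ofReal (g s)) hS hA (hPstarP.ae_le hκ) fun F hF hFbd =>
    (hcondStar F hF hFbd).trans <| hPstarP.ae_le <| hgint.mono fun _ hω =>
      (integral_normalizedWithDensity_ofReal hg hg0 hω.1 F).symm
  have hP : IsCondLaw P S A fun a =>
      (Q a).normalizedWithDensity fun s => ENNReal.ofReal (g s / h s a) :=
    (hstar.of_withDensity hS hA hw (fun p => (ENNReal.ofReal_pos.2 (div_pos (hh0 _ _) hWpos)).ne')
      (fun _ => ENNReal.ofReal_ne_top) (hκ.mono fun _ h => h.ne_zero)).congr <|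
      hgint.mono fun _ hω => normalizedWithDensity_ofReal_div hg hω.1 hg0 hω.2
        (hh.comp measurable_prodMk_right) (hh0 · _) hWpos
  have hgh0 : ∀ a s, 0 ≤ g s / h s a := fun a s => div_nonneg (hg0 s) (hh0 s a).le
  filter_upwards [hP.condExp_ae_eq hS hA (hghint.mono fun _ hω =>
    isProbabilityMeasure_normalizedWithDensity_ofReal hω.1 (hgh0 _) hω.2) hF hFbd, hghint]
    with ω h1 h2
  exact h1.trans (integral_normalizedWithDensity_ofReal (g := fun s => g s / h s (A ω))
    (hg.div (hh.comp measurable_prodMk_right)) (hgh0 _) h2.1 F)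

/-- **Undoing a reweighting.** Let `P` be a probability measure, `W = h(S,A) ≥ 0` with
`0 < E[W] < ∞`, and `P* = (W/E[W])·dP`. If under `P*` the conditional law of `S` given
`σ(A)` is `Q_A` weighted by `g(S)` (normalized), then under `P` the conditional law of `S`
given `σ(A)` is `Q_A` weighted by `g(S)/h(S,A)` (normalized), provided the normalizations
are a.s. finite and positive. Conditional laws are expressed via bounded measurable test
functions `F`. -/
theorem conditional_law_undo_reweighting
    {Ω 𝒮 𝒜 : Type*} [MeasurableSpace Ω] [MeasurableSpace 𝒮] [MeasurableSpace 𝒜]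
    (P : Measure Ω) [IsProbabilityMeasure P]
    (S : Ω → 𝒮) (A : Ω → 𝒜) (hS : Measurable S) (hA : Measurable A)
    (Q : 𝒜 → Measure 𝒮) (hQ : ∀ a, IsProbabilityMeasure (Q a))
    (g : 𝒮 → ℝ) (hg : Measurable g) (hg0 : ∀ s, 0 ≤ g s)
    (h : 𝒮 → 𝒜 → ℝ) (hh : Measurable (Function.uncurry h))
    (hh0 : ∀ s a, 0 < h s a)
    (W : Ω → ℝ) (hW : ∀ ω, W ω = h (S ω) (A ω))
    (hWint : Integrable W P) (hWpos : 0 < ∫ ω, W ω ∂P)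
    -- normalizations finite and positive a.s.:
    (hgint : ∀ᵐ ω ∂P, Integrable g (Q (A ω)) ∧ 0 < ∫ s, g s ∂Q (A ω))
    (hghint : ∀ᵐ ω ∂P, Integrable (fun s => g s / h s (A ω)) (Q (A ω)) ∧
      0 < ∫ s, g s / h s (A ω) ∂Q (A ω))
    -- under `P*`, the conditional law of `S` given `σ(A)` is `Q_A` weighted by `g`:
    (hcondStar : ∀ F : 𝒮 → ℝ, Measurable F → (∃ C : ℝ, ∀ s, |F s| ≤ C) →
      (P.withDensity (fun ω => ENNReal.ofReal (W ω / ∫ ω', W ω' ∂P)))[fun ω => F (S ω)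
          | MeasurableSpace.comap A inferInstance]
        =ᵐ[P.withDensity (fun ω => ENNReal.ofReal (W ω / ∫ ω', W ω' ∂P))]
          fun ω => (∫ s, F s * g s ∂Q (A ω)) / ∫ s, g s ∂Q (A ω)) :
    ∀ F : 𝒮 → ℝ, Measurable F → (∃ C : ℝ, ∀ s, |F s| ≤ C) →
      P[fun ω => F (S ω) | MeasurableSpace.comap A inferInstance]
        =ᵐ[P] fun ω =>
          (∫ s, F s * (g s / h s (A ω)) ∂Q (A ω)) /
            ∫ s, g s / h s (A ω) ∂Q (A ω) :=
  conditional_law_undo_reweighting_general P S A hS hA Q g hg hg0 h hh hh0 W hW hWint hWpos hgint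
    hghint hcondStar
end

section
/- Suppose for each n, (S_n, A_n) are random variables in a product of Polish spaces with (S_n, A_n) → (S, A) almost surely, and suppose the conditional law of S_n given A_n equals κ_n(A_n, ·) where the kernels satisfy: almost surely, κ_n(A_n, ·) converges weakly to a kernel value κ(A, ·). Then the conditional law of S given A is κ(A, ·). -/
/-!
Testing the conditional law of `S_n` against `G(A_n)` gives
`E[F(S_n) G(A_n)] = E[(∫ F dκ_n(A_n, ·)) G(A_n)]` for every bounded continuous `G`. Both integrands
are bounded by `‖F‖ ‖G‖` and converge almost surely, so by bounded convergence
`E[F(S) G(A)] = E[(∫ F dκ(A, ·)) G(A)]`. On the metrizable space `𝒜` indicators of closed sets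
are bounded pointwise limits of bounded continuous functions, so these identities already
determine `E[F(S) | σ(A)]`.
-/

open MeasureTheory ProbabilityTheory Filter BoundedContinuousFunction Topology

theorem ae_eq_zero_of_forall_integral_mul_eq_zero {β : Type*} [TopologicalSpace β]
    [HasOuterApproxClosed β] [MeasurableSpace β] [BorelSpace β] {ν : Measure β} {w : β → ℝ}
    (hw : Integrable w ν) (h : ∀ G : β →ᵇ ℝ, ∫ x, w x * G x ∂ν = 0) : w =ᵐ[ν] 0 := by
  refine ae_eq_zero_of_forall_setIntegral_isClosed_eq_zero hw fun F hF => ?_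
  let G (n : ℕ) : β →ᵇ ℝ :=
    ⟨⟨fun x => hF.apprSeq n x, by fun_prop⟩, (hF.apprSeq n).map_bounded'⟩
  have hG (n : ℕ) (x : β) : G n x = hF.apprSeq n x := rfl
  have hG_lim (x : β) : Tendsto (fun n => w x * G n x) atTop (𝓝 (F.indicator w x)) := by
    have := (NNReal.continuous_coe.tendsto _).comp
      (tendsto_pi_nhds.mp (HasOuterApproxClosed.tendsto_apprSeq hF) x)
    by_cases hx : x ∈ F <;> simpa [hx, hG] using this.const_mul (w x)
  have hlim : Tendsto (fun n => ∫ x, w x * G n x ∂ν) atTop (𝓝 (∫ x in F, w x ∂ν)) := by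
    rw [← integral_indicator hF.measurableSet]
    refine tendsto_integral_of_dominated_convergence (fun x => ‖w x‖)
      (fun n => hw.aestronglyMeasurable.mul (G n).continuous.aestronglyMeasurable) hw.norm
      (fun n => ae_of_all _ fun x => ?_) (ae_of_all _ hG_lim)
    simpa [hG, norm_mul] using
      mul_le_of_le_one_right (norm_nonneg (w x)) (HasOuterApproxClosed.apprSeq_apply_le_one hF n x)
  exact tendsto_nhds_unique hlim (by simp only [h]; exact tendsto_const_nhds)

section

variable {Ω 𝒜 : Type*} [MeasurableSpace Ω] {P : Measure Ω} [IsFiniteMeasure P]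
  [TopologicalSpace 𝒜] [MeasurableSpace 𝒜] {A : Ω → 𝒜}

theorem integral_condExp_comap_mul [OpensMeasurableSpace 𝒜] (hA : Measurable A) {X : Ω → ℝ}
    (hX : Integrable X P) (G : 𝒜 →ᵇ ℝ) :
    ∫ ω, P[X | MeasurableSpace.comap A inferInstance] ω * G (A ω) ∂P
      = ∫ ω, X ω * G (A ω) ∂P := by
  have hGA : StronglyMeasurable[MeasurableSpace.comap A inferInstance] (fun ω => G (A ω)) :=
    G.continuous.measurable.comp (comap_measurable A) |>.stronglyMeasurable
  have hGAX : Integrable ((fun ω => G (A ω)) * X) P :=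
    hX.bdd_mul (hGA.mono hA.comap_le).aestronglyMeasurable
      (ae_of_all _ fun ω => G.norm_coe_le_norm (A ω))
  calc ∫ ω, P[X | MeasurableSpace.comap A inferInstance] ω * G (A ω) ∂P
      = ∫ ω, P[(fun ω => G (A ω)) * X | MeasurableSpace.comap A inferInstance] ω ∂P :=
        integral_congr_ae <| (condExp_mul_of_stronglyMeasurable_left hGA hGAX hX).mono
          fun ω hω => by rw [hω, Pi.mul_apply, mul_comm]
    _ = ∫ ω, X ω * G (A ω) ∂P := by
        rw [integral_condExp hA.comap_le]; simp only [Pi.mul_apply, mul_comm]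

theorem condExp_comap_eq_of_forall_integral_mul_eq [HasOuterApproxClosed 𝒜] [BorelSpace 𝒜]
    (hA : Measurable A) {X : Ω → ℝ} (hX : Integrable X P) {g : 𝒜 → ℝ} (hg : Measurable g)
    (hgA : Integrable (g ∘ A) P)
    (h : ∀ G : 𝒜 →ᵇ ℝ, ∫ ω, X ω * G (A ω) ∂P = ∫ ω, g (A ω) * G (A ω) ∂P) :
    P[X | MeasurableSpace.comap A inferInstance] =ᵐ[P] g ∘ A := by
  -- Doob–Dynkin: the conditional expectation factors through `A`.
  obtain ⟨φ, hφ, hφA⟩ := (stronglyMeasurable_condExp (μ := P) (f := X)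
    (m := MeasurableSpace.comap A inferInstance)).exists_eq_measurable_comp
  have hφ_int : Integrable (φ - g) (P.map A) := by
    rw [integrable_map_measure (hφ.measurable.sub hg).aestronglyMeasurable hA.aemeasurable]
    exact (hφA ▸ integrable_condExp).sub hgA
  have hφg : φ - g =ᵐ[P.map A] 0 := by
    refine ae_eq_zero_of_forall_integral_mul_eq_zero hφ_int fun G => ?_
    rw [integral_map (f := fun a => (φ - g) a * G a) hA.aemeasurable
      ((hφ.measurable.sub hg).mul G.continuous.measurable).aestronglyMeasurable]
    have hint {f : 𝒜 → ℝ} (hf : Integrable (f ∘ A) P) :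
        Integrable (fun ω => f (A ω) * G (A ω)) P :=
      hf.mul_bdd (G.continuous.measurable.comp hA).aestronglyMeasurable
        (ae_of_all _ fun ω => G.norm_coe_le_norm (A ω))
    simp only [Pi.sub_apply, sub_mul]
    rw [integral_sub (hint (hφA ▸ integrable_condExp)) (hint hgA), ← h,
      ← integral_condExp_comap_mul hA hX, hφA]
    exact sub_self _
  rw [hφA]
  filter_upwards [ae_of_ae_map hA.aemeasurable hφg] with ω hω
  simpa [sub_eq_zero] using hω

theorem tendsto_integral_mul_comp_of_ae_tendsto [OpensMeasurableSpace 𝒜] {u : ℕ → Ω → ℝ}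
    {u' : Ω → ℝ} {A' : ℕ → Ω → 𝒜} (G : 𝒜 →ᵇ ℝ) (C : ℝ) (hu : ∀ n, AEStronglyMeasurable (u n) P)
    (hA' : ∀ n, Measurable (A' n)) (hu_le : ∀ n ω, ‖u n ω‖ ≤ C)
    (hu_lim : ∀ᵐ ω ∂P, Tendsto (fun n => u n ω) atTop (𝓝 (u' ω)))
    (hA'_lim : ∀ᵐ ω ∂P, Tendsto (fun n => A' n ω) atTop (𝓝 (A ω))) :
    Tendsto (fun n => ∫ ω, u n ω * G (A' n ω) ∂P) atTop (𝓝 (∫ ω, u' ω * G (A ω) ∂P)) := by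
  refine tendsto_integral_filter_of_norm_le_const
    (Eventually.of_forall fun n =>
      (hu n).mul (G.continuous.measurable.comp (hA' n)).aestronglyMeasurable)
    ⟨C * ‖G‖, Eventually.of_forall fun n => ae_of_all _ fun ω => ?_⟩ ?_
  · rw [norm_mul]
    exact mul_le_mul (hu_le n ω) (G.norm_coe_le_norm _) (norm_nonneg _)
      ((norm_nonneg _).trans (hu_le n ω))
  · filter_upwards [hu_lim, hA'_lim] with ω hu hA
    exact hu.mul ((G.continuous.tendsto _).comp hA)

end

theorem conditional_law_of_limit_general
    {Ω 𝒮 𝒜 : Type*} [MeasurableSpace Ω]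
    [TopologicalSpace 𝒮] [MeasurableSpace 𝒮] [BorelSpace 𝒮]
    [TopologicalSpace 𝒜] [PolishSpace 𝒜] [MeasurableSpace 𝒜] [BorelSpace 𝒜]
    (P : Measure Ω) [IsProbabilityMeasure P]
    (S : ℕ → Ω → 𝒮) (A : ℕ → Ω → 𝒜) (Slim : Ω → 𝒮) (Alim : Ω → 𝒜)
    (hS : ∀ n, Measurable (S n)) (hA : ∀ n, Measurable (A n))
    (hSlim : Measurable Slim) (hAlim : Measurable Alim)
    (κn : ℕ → Kernel 𝒜 𝒮) (κ : Kernel 𝒜 𝒮)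
    [∀ n, IsMarkovKernel (κn n)] [IsMarkovKernel κ]
    -- almost sure convergence `(S_n, A_n) → (S, A)`:
    (hconv : ∀ᵐ ω ∂P, Tendsto (fun n => (S n ω, A n ω)) atTop (nhds (Slim ω, Alim ω)))
    -- the conditional law of `S_n` given `A_n` is `κ_n(A_n, ·)`:
    (hcond : ∀ n, ∀ F : 𝒮 →ᵇ ℝ,
      P[fun ω => F (S n ω) | MeasurableSpace.comap (A n) inferInstance]
        =ᵐ[P] fun ω => ∫ x, F x ∂(κn n (A n ω)))
    -- almost surely `κ_n(A_n, ·) → κ(A, ·)` weakly: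
    (hκconv : ∀ᵐ ω ∂P, ∀ F : 𝒮 →ᵇ ℝ,
      Tendsto (fun n => ∫ x, F x ∂(κn n (A n ω))) atTop
        (nhds (∫ x, F x ∂(κ (Alim ω))))) :
    ∀ F : 𝒮 →ᵇ ℝ,
      P[fun ω => F (Slim ω) | MeasurableSpace.comap Alim inferInstance]
        =ᵐ[P] fun ω => ∫ x, F x ∂(κ (Alim ω)) := by
  intro F
  have hF_int {X : Ω → 𝒮} (hX : Measurable X) : Integrable (fun ω => F (X ω)) P :=
    .of_bound (F.continuous.measurable.comp hX).aestronglyMeasurable ‖F‖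
      (ae_of_all _ fun ω => F.norm_coe_le_norm (X ω))
  have hκF_meas (η : Kernel 𝒜 𝒮) : Measurable fun a => ∫ x, F x ∂η a :=
    (F.continuous.stronglyMeasurable.integral_kernel (κ := η)).measurable
  have hS_lim := hconv.mono fun ω hω => (continuous_fst.tendsto _).comp hω
  have hA_lim := hconv.mono fun ω hω => (continuous_snd.tendsto _).comp hω
  refine condExp_comap_eq_of_forall_integral_mul_eq hAlim (hF_int hSlim) (hκF_meas κ)
    (.of_bound ((hκF_meas κ).comp hAlim).aestronglyMeasurable ‖F‖
      (ae_of_all _ fun ω => F.norm_integral_le_norm (κ (Alim ω)))) fun G => ?_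
  have h_n (n : ℕ) : ∫ ω, F (S n ω) * G (A n ω) ∂P
      = ∫ ω, (∫ x, F x ∂κn n (A n ω)) * G (A n ω) ∂P := by
    rw [← integral_condExp_comap_mul (hA n) (hF_int (hS n))]
    exact integral_congr_ae <| (hcond n F).mono fun ω hω => congrArg (· * G (A n ω)) hω
  have h_lhs := tendsto_integral_mul_comp_of_ae_tendsto G ‖F‖
    (fun n => (F.continuous.measurable.comp (hS n)).aestronglyMeasurable) hA
    (fun n ω => F.norm_coe_le_norm _)
    (hS_lim.mono fun ω hω => (F.continuous.tendsto _).comp hω) hA_lim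
  have h_rhs := tendsto_integral_mul_comp_of_ae_tendsto G ‖F‖
    (fun n => ((hκF_meas (κn n)).comp (hA n)).aestronglyMeasurable) hA
    (fun n ω => F.norm_integral_le_norm _) (hκconv.mono fun ω hω => hω F) hA_lim
  exact tendsto_nhds_unique h_lhs (h_rhs.congr fun n => (h_n n).symm)

/-- **Convergence of conditional distributions.** Suppose `(S_n, A_n) → (S, A)` almost
surely in a product of Polish spaces, the conditional law of `S_n` given `A_n` is
`κ_n(A_n, ·)` for Markov kernels `κ_n`, and almost surely `κ_n(A_n, ·) → κ(A, ·)` weakly.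
Then the conditional law of `S` given `A` is `κ(A, ·)`: for every bounded continuous `F`,
`E[F(S) | σ(A)] = ∫ F dκ(A, ·)` almost surely. -/
theorem conditional_law_of_limit
    {Ω 𝒮 𝒜 : Type*} [MeasurableSpace Ω]
    [TopologicalSpace 𝒮] [PolishSpace 𝒮] [MeasurableSpace 𝒮] [BorelSpace 𝒮]
    [TopologicalSpace 𝒜] [PolishSpace 𝒜] [MeasurableSpace 𝒜] [BorelSpace 𝒜]
    (P : Measure Ω) [IsProbabilityMeasure P]
    (S : ℕ → Ω → 𝒮) (A : ℕ → Ω → 𝒜) (Slim : Ω → 𝒮) (Alim : Ω → 𝒜)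
    (hS : ∀ n, Measurable (S n)) (hA : ∀ n, Measurable (A n))
    (hSlim : Measurable Slim) (hAlim : Measurable Alim)
    (κn : ℕ → Kernel 𝒜 𝒮) (κ : Kernel 𝒜 𝒮)
    [∀ n, IsMarkovKernel (κn n)] [IsMarkovKernel κ]
    -- almost sure convergence `(S_n, A_n) → (S, A)`:
    (hconv : ∀ᵐ ω ∂P, Tendsto (fun n => (S n ω, A n ω)) atTop (nhds (Slim ω, Alim ω)))
    -- the conditional law of `S_n` given `A_n` is `κ_n(A_n, ·)`:
    (hcond : ∀ n, ∀ F : 𝒮 →ᵇ ℝ,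
      P[fun ω => F (S n ω) | MeasurableSpace.comap (A n) inferInstance]
        =ᵐ[P] fun ω => ∫ x, F x ∂(κn n (A n ω)))
    -- almost surely `κ_n(A_n, ·) → κ(A, ·)` weakly:
    (hκconv : ∀ᵐ ω ∂P, ∀ F : 𝒮 →ᵇ ℝ,
      Tendsto (fun n => ∫ x, F x ∂(κn n (A n ω))) atTop
        (nhds (∫ x, F x ∂(κ (Alim ω))))) :
    ∀ F : 𝒮 →ᵇ ℝ,
      P[fun ω => F (Slim ω) | MeasurableSpace.comap Alim inferInstance]
        =ᵐ[P] fun ω => ∫ x, F x ∂(κ (Alim ω)) :=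
  conditional_law_of_limit_general P S A Slim Alim hS hA hSlim hAlim κn κ hconv hcond hκconv
end
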